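/- Let n ≥ 1 and let M ∈ Sp(2n) have the n×n block form M = [[A, B],[C, D]] with B and D invertible. Then for every ω ∈ ℂ with |ω| = 1, det(N M⁻¹ N M − ω I_{2n}) = (−4)ⁿ ωⁿ det(CBᵀ − ((Re ω − 1)/2) Iₙ), where the real matrices are regarded as complex matrices. -/

import Mathlib

open Matrix

/-- The standard symplectic matrix `J = [[0, -Iₙ], [Iₙ, 0]]` in `n × n` block form. -/
def Jmat (n : ℕ) : Matrix (Fin n ⊕ Fin n) (Fin n ⊕ Fin n) ℝ :=
  Matrix.fromBlocks 0 (-1) 1 0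

/-- The matrix `N = [[-Iₙ, 0], [0, Iₙ]]` in `n × n` block form. -/
def Nmat (n : ℕ) : Matrix (Fin n ⊕ Fin n) (Fin n ⊕ Fin n) ℝ :=
  Matrix.fromBlocks (-1) 0 0 1

/-!
Since `M⁻¹ M = 1` and `N² = 1`, we have `N M⁻¹ N M - ω = N M⁻¹ (N M - ω M N)`, where `det M = 1`
and `det N = (-1)ⁿ`. The pencil `N M - ω M N` has blocks `(ω-1)A, -(1+ω)B, (1+ω)C, (1-ω)D`;
multiplying it on the right by `[[-(1+ω)Bᵀ, 0], [(1-ω)Aᵀ, I]]` and using the symplectic relations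
`ABᵀ = BAᵀ`, `DAᵀ - CBᵀ = I` kills its upper-left block and leaves `(1-ω)² I - 4ω CBᵀ` in the
lower-left one, so `det (N M⁻¹ N M - ω) = det ((1-ω)² I - 4ω CBᵀ)` whenever `ω ≠ -1`; at `ω = -1`
the pencil is block diagonal. Finally `(1-ω)² = 4ω (Re ω - 1)/2` on the unit circle.
-/

namespace Matrix

variable {m R : Type*} [DecidableEq m] [CommRing R]

variable (m R) in
def N : Matrix (m ⊕ m) (m ⊕ m) R :=
  fromBlocks (-1) 0 0 1

theorem map_N {S : Type*} [CommRing S] (f : R →+* S) : (N m R).map f = N m S := by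
  simp [N, fromBlocks_map, Matrix.map_neg]

variable [Fintype m]

theorem map_nonsing_inv {S : Type*} [CommRing S] (f : R →+* S) {M : Matrix m m R}
    (hM : IsUnit M.det) : M⁻¹.map f = (M.map f)⁻¹ :=
  (inv_eq_left_inv <| by
    rw [← Matrix.map_mul, nonsing_inv_mul _ hM, Matrix.map_one _ f.map_zero f.map_one]).symm

theorem det_fromBlocks_zero_one_one_zero :
    (fromBlocks 0 1 1 0 : Matrix (m ⊕ m) (m ⊕ m) R).det = (-1) ^ Fintype.card m := by
  have shears : (fromBlocks 0 1 1 0 : Matrix (m ⊕ m) (m ⊕ m) R) =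
      fromBlocks 1 1 0 1 * fromBlocks 1 0 (-1) 1 * fromBlocks 1 1 0 1 *
        fromBlocks (-1) 0 0 1 := by
    simp [fromBlocks_multiply]
  simp [shears, det_neg]

theorem det_fromBlocks_zero₁₁ (B C D : Matrix m m R) :
    (fromBlocks 0 B C D).det = (-1) ^ Fintype.card m * B.det * C.det := by
  have : fromBlocks 0 B C D = fromBlocks B 0 D C * fromBlocks 0 1 1 0 := by
    simp [fromBlocks_multiply]
  rw [this, det_mul, det_fromBlocks_zero₁₂, det_fromBlocks_zero_one_one_zero]
  ring

theorem N_mul_self : N m R * N m R = 1 := by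
  simp [N, fromBlocks_multiply]

theorem det_N : (N m R).det = (-1) ^ Fintype.card m := by
  simp [N, det_neg]

theorem map_N_mul_nonsing_inv_mul_N_mul {S : Type*} [CommRing S] (f : R →+* S)
    {M : Matrix (m ⊕ m) (m ⊕ m) R} (hM : IsUnit M.det) :
    (N m R * M⁻¹ * N m R * M).map f = N m S * (M.map f)⁻¹ * N m S * M.map f := by
  simp only [Matrix.map_mul, map_nonsing_inv f hM, map_N]

theorem N_mul_sub_smul_mul_N (A B C D : Matrix m m R) (ω : R) :
    N m R * fromBlocks A B C D - ω • (fromBlocks A B C D * N m R) =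
      fromBlocks ((ω - 1) • A) (-(1 + ω) • B) ((1 + ω) • C) ((1 - ω) • D) := by
  simp only [N, fromBlocks_multiply, fromBlocks_smul, sub_eq_add_neg, fromBlocks_neg,
    fromBlocks_add, fromBlocks_inj]
  refine ⟨?_, ?_, ?_, ?_⟩ <;> simp <;> module

end Matrix

namespace SymplecticGroup

variable {m R : Type*} [Fintype m] [DecidableEq m] [CommRing R] {A B C D : Matrix m m R}

theorem fromBlocks_mem_iff' :
    fromBlocks A B C D ∈ symplecticGroup m R ↔
      A * Bᵀ = B * Aᵀ ∧ C * Dᵀ = D * Cᵀ ∧ A * Dᵀ - B * Cᵀ = 1 := by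
  rw [← transpose_mem_iff, fromBlocks_transpose, fromBlocks_mem_iff]
  simp only [transpose_transpose]

theorem N_mul_sub_smul_mul_N_mul (hM : fromBlocks A B C D ∈ symplecticGroup m R) (ω : R) :
    (N m R * fromBlocks A B C D - ω • (fromBlocks A B C D * N m R)) *
        fromBlocks (-(1 + ω) • Bᵀ) 0 ((1 - ω) • Aᵀ) 1 =
      fromBlocks 0 (-(1 + ω) • B) ((1 - ω) ^ 2 • 1 - (4 * ω) • (C * Bᵀ)) ((1 - ω) • D) := by
  obtain ⟨hAB, -, hAD⟩ := fromBlocks_mem_iff'.1 hM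
  have hDA : D * Aᵀ = C * Bᵀ + 1 := by
    simpa [transpose_sub, sub_eq_iff_eq_add'] using congrArg transpose hAD
  rw [N_mul_sub_smul_mul_N, fromBlocks_multiply]
  simp only [smul_mul_smul, Matrix.mul_zero, Matrix.mul_one, zero_add, hAB, hDA]
  congr 1 <;> module

theorem det_N_mul_sub_smul_mul_N [IsDomain R] (hM : fromBlocks A B C D ∈ symplecticGroup m R)
    (hB : B.det ≠ 0) (ω : R) :
    (N m R * fromBlocks A B C D - ω • (fromBlocks A B C D * N m R)).det =
      (-1) ^ Fintype.card m * ((1 - ω) ^ 2 • 1 - (4 * ω) • (C * Bᵀ)).det := by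
  obtain hω | hω := eq_or_ne (1 + ω) 0
  · obtain rfl : ω = -1 := by linear_combination hω
    obtain ⟨-, -, hAD⟩ := fromBlocks_mem_iff'.1 hM
    have hS : (1 - -1 : R) ^ 2 • 1 - (4 * -1 : R) • (C * Bᵀ) = (4 : R) • (A * Dᵀ)ᵀ := by
      rw [sub_eq_iff_eq_add'.1 hAD]
      simp only [transpose_add, transpose_one, transpose_mul, transpose_transpose]
      module
    calc (N m R * fromBlocks A B C D - (-1 : R) • (fromBlocks A B C D * N m R)).det
        = (fromBlocks ((-2 : R) • A) 0 0 ((2 : R) • D)).det := by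
          rw [N_mul_sub_smul_mul_N]; norm_num
      _ = (-1) ^ Fintype.card m * (4 : R) ^ Fintype.card m * (A * Dᵀ).det := by
          rw [det_fromBlocks_zero₂₁, det_smul, det_smul, det_mul, det_transpose,
            show (-2 : R) = -1 * 2 by ring, show (4 : R) = 2 * 2 by norm_num, mul_pow, mul_pow]
          ring
      _ = _ := by rw [hS, det_smul, det_transpose, mul_assoc]
  · have h := congrArg det (N_mul_sub_smul_mul_N_mul hM ω)
    rw [det_mul, det_fromBlocks_zero₁₂, det_fromBlocks_zero₁₁, det_smul, det_smul,
      det_transpose, det_one, mul_one] at h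
    refine mul_right_cancel₀ (b := (-(1 + ω)) ^ Fintype.card m * B.det) ?_ ?_
    · exact mul_ne_zero (pow_ne_zero _ (neg_ne_zero.2 hω)) hB
    · rw [h]; ring

theorem det_N_mul_inv_mul_N_mul_sub_smul [IsDomain R]
    (hM : fromBlocks A B C D ∈ symplecticGroup m R) (hB : B.det ≠ 0) (ω : R) :
    (N m R * (fromBlocks A B C D)⁻¹ * N m R * fromBlocks A B C D - ω • 1).det =
      ((1 - ω) ^ 2 • 1 - (4 * ω) • (C * Bᵀ)).det := by
  set M := fromBlocks A B C D
  have hfactor :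
      N m R * M⁻¹ * N m R * M - ω • 1 = N m R * M⁻¹ * (N m R * M - ω • (M * N m R)) := by
    have hcancel : N m R * M⁻¹ * (M * N m R) = 1 := by
      rw [← Matrix.mul_assoc, Matrix.mul_assoc (N m R), nonsing_inv_mul _ (symplectic_det hM),
        Matrix.mul_one, N_mul_self]
    rw [Matrix.mul_sub, Matrix.mul_smul, hcancel, ← Matrix.mul_assoc]
  rw [hfactor, det_mul, det_mul, det_nonsing_inv, det_eq_one hM, Ring.inverse_one, det_N,
    det_N_mul_sub_smul_mul_N hM hB, mul_one, ← mul_assoc, ← mul_pow, neg_one_mul, neg_neg,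
    one_pow, one_mul]

end SymplecticGroup

theorem Complex.one_sub_sq_of_norm_eq_one {ω : ℂ} (hω : ‖ω‖ = 1) :
    (1 - ω) ^ 2 = 4 * ω * (((ω.re - 1) / 2 : ℝ) : ℂ) := by
  have hconj : ω * (starRingEnd ℂ) ω = 1 := by
    rw [Complex.mul_conj, Complex.normSq_eq_norm_sq, hω]
    norm_num
  push_cast
  rw [Complex.re_eq_add_conj]
  linear_combination -hconj

theorem stmt_10 (n : ℕ)
    (A B C D : Matrix (Fin n) (Fin n) ℝ)
    (M : Matrix (Fin n ⊕ Fin n) (Fin n ⊕ Fin n) ℝ)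
    (hM : M = Matrix.fromBlocks A B C D)
    (hsp : Mᵀ * Jmat n * M = Jmat n)
    (hB : IsUnit B) (ω : ℂ) (hω : ‖ω‖ = 1) :
    ((Nmat n * M⁻¹ * Nmat n * M).map (Complex.ofReal ·) - ω • 1).det =
      (-4 : ℂ) ^ n * ω ^ n *
        ((C * Bᵀ).map (Complex.ofReal ·)
          - (((ω.re - 1) / 2 : ℝ) : ℂ) • (1 : Matrix (Fin n) (Fin n) ℂ)).det := by
  subst hM
  set f := Complex.ofRealHom
  have hsymp : fromBlocks A B C D ∈ symplecticGroup (Fin n) ℝ := SymplecticGroup.mem_iff'.2 hsp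
  have hsympℂ :
      fromBlocks (A.map f) (B.map f) (C.map f) (D.map f) ∈ symplecticGroup (Fin n) ℂ := by
    rw [← fromBlocks_map]
    exact SymplecticGroup.map_mem hsymp f
  have hBℂ : (B.map f).det ≠ 0 := by
    rw [← RingHom.mapMatrix_apply, ← RingHom.map_det]
    exact Complex.ofReal_ne_zero.2 ((isUnit_iff_isUnit_det B).1 hB).ne_zero
  have hCB : (C * Bᵀ).map f = C.map f * (B.map f)ᵀ := by rw [Matrix.map_mul, transpose_map]
  change det ((Nmat n * (fromBlocks A B C D)⁻¹ * Nmat n * fromBlocks A B C D).map f - ω • 1) =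
    _ * det ((C * Bᵀ).map f - _)
  rw [show Nmat n = N (Fin n) ℝ from rfl,
    map_N_mul_nonsing_inv_mul_N_mul f (SymplecticGroup.symplectic_det hsymp), fromBlocks_map,
    hCB, SymplecticGroup.det_N_mul_inv_mul_N_mul_sub_smul hsympℂ hBℂ,
    Complex.one_sub_sq_of_norm_eq_one hω]
  set c : ℂ := (((ω.re - 1) / 2 : ℝ) : ℂ)
  calc ((4 * ω * c) • 1 - (4 * ω) • (C.map f * (B.map f)ᵀ)).det
      = ((-4 * ω) • (C.map f * (B.map f)ᵀ - c • 1)).det := by congr 1; module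
    _ = _ := by rw [det_smul, Fintype.card_fin, mul_pow]
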